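/- arXiv:1810.08078 — 6 statements merged into one kernel-verified Lean document; each statement's English description precedes it below -/
import Mathlib

section
/- Suppose two users k1 and k2 are paired on a subcarrier and powered by two different RRHs r1 and r2 respectively, with h12 ≥ h22 and h21 ≥ h11. Then both users can perform SIC, i.e. R2@1 ≥ R2@2 and R1@2 ≥ R1@1. -/
theorem sinr_le_sinr {P Q σ2 a b c d : ℝ} (hP : 0 ≤ P) (hQ : 0 ≤ Q) (hσ2 : 0 < σ2)
    (hb : 0 ≤ b) (hd : 0 ≤ d) (hba : b ≤ a) (hdc : d ≤ c) :
    P * b ^ 2 / (Q * c ^ 2 + σ2) ≤ P * a ^ 2 / (Q * d ^ 2 + σ2) := by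
  have : 0 < Q * d ^ 2 + σ2 := by positivity
  gcongr

theorem mul_logb_one_add_le {K x y : ℝ} (hK : 0 ≤ K) (hx : 0 ≤ x) (hxy : x ≤ y) :
    K * Real.logb 2 (1 + x) ≤ K * Real.logb 2 (1 + y) := by
  gcongr
  linarith

theorem mutual_SIC_sufficient_conditions_general
    (B S σ2 P1 P2 h11 h12 h21 h22 : ℝ)
    (hB : 0 < B) (hS : 0 < S) (hσ2 : 0 < σ2) (hP1 : 0 < P1) (hP2 : 0 < P2)
    (hh11 : 0 < h11) (hh22 : 0 < h22)
    (hcond1 : h12 ≥ h22) (hcond2 : h21 ≥ h11) :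
    (B / S) * Real.logb 2 (1 + P2 * h12 ^ 2 / (P1 * h11 ^ 2 + σ2)) ≥
      (B / S) * Real.logb 2 (1 + P2 * h22 ^ 2 / (P1 * h21 ^ 2 + σ2)) ∧
    (B / S) * Real.logb 2 (1 + P1 * h21 ^ 2 / (P2 * h22 ^ 2 + σ2)) ≥
      (B / S) * Real.logb 2 (1 + P1 * h11 ^ 2 / (P2 * h12 ^ 2 + σ2)) := by
  have hBS : 0 ≤ B / S := by positivity
  constructor
  · refine mul_logb_one_add_le hBS (by positivity) ?_
    exact sinr_le_sinr hP2.le hP1.le hσ2 hh22.le hh11.le hcond1 hcond2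
  · refine mul_logb_one_add_le hBS (by positivity) ?_
    exact sinr_le_sinr hP1.le hP2.le hσ2 hh11.le hh22.le hcond2 hcond1

/-- Two users paired on a subcarrier, powered by distinct RRHs `r1`, `r2`.
If `h12 ≥ h22` and `h21 ≥ h11`, both users can perform SIC:
`R2@1 ≥ R2@2` and `R1@2 ≥ R1@1`. -/
theorem mutual_SIC_sufficient_conditions
    (B S σ2 P1 P2 h11 h12 h21 h22 : ℝ)
    (hB : 0 < B) (hS : 0 < S) (hσ2 : 0 < σ2) (hP1 : 0 < P1) (hP2 : 0 < P2)
    (hh11 : 0 < h11) (hh12 : 0 < h12) (hh21 : 0 < h21) (hh22 : 0 < h22)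
    (hcond1 : h12 ≥ h22) (hcond2 : h21 ≥ h11) :
    (B / S) * Real.logb 2 (1 + P2 * h12 ^ 2 / (P1 * h11 ^ 2 + σ2)) ≥
      (B / S) * Real.logb 2 (1 + P2 * h22 ^ 2 / (P1 * h21 ^ 2 + σ2)) ∧
    (B / S) * Real.logb 2 (1 + P1 * h21 ^ 2 / (P2 * h22 ^ 2 + σ2)) ≥
      (B / S) * Real.logb 2 (1 + P1 * h11 ^ 2 / (P2 * h12 ^ 2 + σ2)) :=
  mutual_SIC_sufficient_conditions_general B S σ2 P1 P2 h11 h12 h21 h22 hB hS hσ2 hP1 hP2 hh11 hh22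
    hcond1 hcond2
end

section
/- In the special case where both multiplexed signals are powered by the same RRH (h11 = h21 = h1 and h12 = h22 = h2) with h1 > h2, only the stronger user can perform SIC: R2@1 > R2@2 and R1@2 < R1@1. In particular it is impossible for both users to perform SIC simultaneously. -/
/-! With a single transmitting RRH both signals reach a user through the same channel, so the
rate at which either signal is decoded there depends on the channel gain `g = h²` only, through
`g ↦ P g / (Q g + σ²)`, which is strictly increasing. Hence both signals are decoded faster at
the stronger user, and only the stronger user can perform SIC. -/

open Set

/-- The paper's `R` for a signal of power `P` decoded against interference of power `Q` sent
over the same channel of power gain `g = h²`, with `c = B / S`. -/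
noncomputable def decodingRate (c P Q σ2 g : ℝ) : ℝ :=
  c * Real.logb 2 (1 + P * g / (Q * g + σ2))

lemma sinr_strictMonoOn {P Q σ2 : ℝ} (hP : 0 < P) (hQ : 0 ≤ Q) (hσ2 : 0 < σ2) :
    StrictMonoOn (fun g => P * g / (Q * g + σ2)) (Ici 0) := by
  intro a (ha : 0 ≤ a) b (hb : 0 ≤ b) hab
  have hQa : 0 < Q * a + σ2 := by positivity
  have hQb : 0 < Q * b + σ2 := by positivity
  change P * a / (Q * a + σ2) < P * b / (Q * b + σ2)
  rw [div_lt_div_iff₀ hQa hQb]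
  nlinarith [mul_pos (mul_pos hP hσ2) (sub_pos.mpr hab)]

lemma decodingRate_strictMonoOn {c P Q σ2 : ℝ} (hc : 0 < c) (hP : 0 < P) (hQ : 0 ≤ Q)
    (hσ2 : 0 < σ2) : StrictMonoOn (decodingRate c P Q σ2) (Ici 0) := by
  intro a (ha : 0 ≤ a) b hb hab
  have hsinr := sinr_strictMonoOn hP hQ hσ2 ha hb hab
  have hpos : 0 < 1 + P * a / (Q * a + σ2) := by positivity
  exact mul_lt_mul_of_pos_left (Real.logb_lt_logb one_lt_two hpos (by linarith)) hc

theorem single_RRH_only_strong_user_SIC_general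
    (B S σ2 P1 P2 h1 h2 : ℝ)
    (hB : 0 < B) (hS : 0 < S) (hσ2 : 0 < σ2) (hP1 : 0 < P1) (hP2 : 0 < P2)
    (hh2 : 0 < h2) (h12 : h1 > h2) :
    (B / S) * Real.logb 2 (1 + P2 * h1 ^ 2 / (P1 * h1 ^ 2 + σ2)) >
      (B / S) * Real.logb 2 (1 + P2 * h2 ^ 2 / (P1 * h2 ^ 2 + σ2)) ∧
    (B / S) * Real.logb 2 (1 + P1 * h2 ^ 2 / (P2 * h2 ^ 2 + σ2)) <
      (B / S) * Real.logb 2 (1 + P1 * h1 ^ 2 / (P2 * h1 ^ 2 + σ2)) ∧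
    ¬ ((B / S) * Real.logb 2 (1 + P2 * h1 ^ 2 / (P1 * h1 ^ 2 + σ2)) ≥
        (B / S) * Real.logb 2 (1 + P2 * h2 ^ 2 / (P1 * h2 ^ 2 + σ2)) ∧
       (B / S) * Real.logb 2 (1 + P1 * h2 ^ 2 / (P2 * h2 ^ 2 + σ2)) ≥
        (B / S) * Real.logb 2 (1 + P1 * h1 ^ 2 / (P2 * h1 ^ 2 + σ2))) := by
  have hc : 0 < B / S := div_pos hB hS
  have hg2 : h2 ^ 2 ∈ Ici (0 : ℝ) := sq_nonneg h2
  have hg1 : h1 ^ 2 ∈ Ici (0 : ℝ) := sq_nonneg h1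
  have hg : h2 ^ 2 < h1 ^ 2 := pow_lt_pow_left₀ h12 hh2.le two_ne_zero
  have hrate2 : decodingRate (B / S) P2 P1 σ2 (h2 ^ 2) < decodingRate (B / S) P2 P1 σ2 (h1 ^ 2) :=
    decodingRate_strictMonoOn hc hP2 hP1.le hσ2 hg2 hg1 hg
  have hrate1 : decodingRate (B / S) P1 P2 σ2 (h2 ^ 2) < decodingRate (B / S) P1 P2 σ2 (h1 ^ 2) :=
    decodingRate_strictMonoOn hc hP1 hP2.le hσ2 hg2 hg1 hg
  exact ⟨hrate2, hrate1, fun hmutual => hrate1.not_ge hmutual.2⟩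

/-- Special case of a single powering RRH (`h11 = h21 = h1`, `h12 = h22 = h2`)
with `h1 > h2`: only the stronger user can perform SIC
(`R2@1 > R2@2` and `R1@2 < R1@1`); in particular mutual SIC is impossible. -/
theorem single_RRH_only_strong_user_SIC
    (B S σ2 P1 P2 h1 h2 : ℝ)
    (hB : 0 < B) (hS : 0 < S) (hσ2 : 0 < σ2) (hP1 : 0 < P1) (hP2 : 0 < P2)
    (hh1 : 0 < h1) (hh2 : 0 < h2) (h12 : h1 > h2) :
    (B / S) * Real.logb 2 (1 + P2 * h1 ^ 2 / (P1 * h1 ^ 2 + σ2)) >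
      (B / S) * Real.logb 2 (1 + P2 * h2 ^ 2 / (P1 * h2 ^ 2 + σ2)) ∧
    (B / S) * Real.logb 2 (1 + P1 * h2 ^ 2 / (P2 * h2 ^ 2 + σ2)) <
      (B / S) * Real.logb 2 (1 + P1 * h1 ^ 2 / (P2 * h1 ^ 2 + σ2)) ∧
    ¬ ((B / S) * Real.logb 2 (1 + P2 * h1 ^ 2 / (P1 * h1 ^ 2 + σ2)) ≥
        (B / S) * Real.logb 2 (1 + P2 * h2 ^ 2 / (P1 * h2 ^ 2 + σ2)) ∧
       (B / S) * Real.logb 2 (1 + P1 * h2 ^ 2 / (P2 * h2 ^ 2 + σ2)) ≥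
        (B / S) * Real.logb 2 (1 + P1 * h1 ^ 2 / (P2 * h1 ^ 2 + σ2))) :=
  single_RRH_only_strong_user_SIC_general B S σ2 P1 P2 h1 h2 hB hS hσ2 hP1 hP2 hh2 h12
end

section
/- Let w > 0 be the waterline over N ≥ 1 subcarriers, σ² > 0, h > 0, and define the power variation ΔP = (N+1)·(wᴺ·σ²/h²)^{1/(N+1)} − N·w − σ²/h² incurred by adding a subcarrier with gain h under a constant total rate. Then ΔP ≤ 0, with equality if and only if σ²/h² = w. -/
/-! `(N+1)·(wᴺ·t)^{1/(N+1)}` is `N+1` times the geometric mean of `N` copies of `w` and one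
copy of `t = σ²/h²`, while `N·w + t` is `N+1` times their arithmetic mean; so `ΔP ≤ 0` is the
weighted AM–GM inequality with weights `N/(N+1)` and `1/(N+1)`, and equality holds exactly when
the two values coincide. -/

open Real

namespace Real

theorem pow_mul_rpow_inv_succ {x y : ℝ} (hx : 0 ≤ x) (hy : 0 ≤ y) (n : ℕ) :
    (x ^ n * y) ^ ((1 : ℝ) / (n + 1)) = x ^ ((n : ℝ) / (n + 1)) * y ^ ((1 : ℝ) / (n + 1)) := by
  rw [mul_rpow (pow_nonneg hx n) hy, ← rpow_natCast, ← rpow_mul hx, mul_one_div]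

theorem succ_mul_rpow_pow_mul_le {x y : ℝ} (hx : 0 ≤ x) (hy : 0 ≤ y) (n : ℕ) :
    ((n : ℝ) + 1) * (x ^ n * y) ^ ((1 : ℝ) / (n + 1)) ≤ n * x + y := by
  have hn : (0 : ℝ) < n + 1 := by positivity
  have amgm := geom_mean_le_arith_mean2_weighted (p₁ := x) (p₂ := y)
    (by positivity : (0 : ℝ) ≤ n / (n + 1)) (by positivity : (0 : ℝ) ≤ 1 / (n + 1)) hx hy
    (by field_simp)
  have mean : (n : ℝ) * x + y = (n + 1) * (n / (n + 1) * x + 1 / (n + 1) * y) := by field_simp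
  rw [pow_mul_rpow_inv_succ hx hy, mean]
  exact mul_le_mul_of_nonneg_left amgm hn.le

theorem succ_mul_rpow_pow_mul_eq_iff {x y : ℝ} (hx : 0 ≤ x) (hy : 0 ≤ y) {n : ℕ} (hn : 0 < n) :
    ((n : ℝ) + 1) * (x ^ n * y) ^ ((1 : ℝ) / (n + 1)) = n * x + y ↔ x = y := by
  have hn₁ : (0 : ℝ) < n + 1 := by positivity
  have amgm := geom_mean_eq_arith_mean2_weighted_iff_of_pos (p₁ := x) (p₂ := y)
    (by positivity : (0 : ℝ) < n / (n + 1)) (by positivity : (0 : ℝ) < 1 / (n + 1)) hx hy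
    (by field_simp)
  have mean : (n : ℝ) * x + y = (n + 1) * (n / (n + 1) * x + 1 / (n + 1) * y) := by field_simp
  rw [pow_mul_rpow_inv_succ hx hy, mean, mul_right_inj' hn₁.ne', amgm]

end Real

theorem power_variation_nonpositive_general
    (N : ℕ) (hN : 1 ≤ N) (w σ2 h : ℝ) (hw : 0 < w) (hσ2 : 0 < σ2) :
    ((N : ℝ) + 1) * (w ^ N * σ2 / h ^ 2) ^ ((1 : ℝ) / (N + 1)) - N * w - σ2 / h ^ 2 ≤ 0 ∧
    (((N : ℝ) + 1) * (w ^ N * σ2 / h ^ 2) ^ ((1 : ℝ) / (N + 1)) - N * w - σ2 / h ^ 2 = 0 ↔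
      σ2 / h ^ 2 = w) := by
  have ht : 0 ≤ σ2 / h ^ 2 := by positivity
  rw [mul_div_assoc]
  refine ⟨by linarith [succ_mul_rpow_pow_mul_le hw.le ht N], ?_⟩
  rw [sub_sub, sub_eq_zero, succ_mul_rpow_pow_mul_eq_iff hw.le ht hN, eq_comm]

/-- The power variation `ΔP = (N+1)·(wᴺ·σ²/h²)^(1/(N+1)) − N·w − σ²/h²`
incurred by adding a subcarrier of gain `h` under constant total rate is
nonpositive, with equality iff `σ²/h² = w`. -/
theorem power_variation_nonpositive
    (N : ℕ) (hN : 1 ≤ N) (w σ2 h : ℝ) (hw : 0 < w) (hσ2 : 0 < σ2) (hh : 0 < h) :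
    ((N : ℝ) + 1) * (w ^ N * σ2 / h ^ 2) ^ ((1 : ℝ) / (N + 1)) - N * w - σ2 / h ^ 2 ≤ 0 ∧
    (((N : ℝ) + 1) * (w ^ N * σ2 / h ^ 2) ^ ((1 : ℝ) / (N + 1)) - N * w - σ2 / h ^ 2 = 0 ↔
      σ2 / h ^ 2 = w) :=
  power_variation_nonpositive_general N hN w σ2 h hw hσ2
end

section
/- (Appendix A) The power variation ΔP(h) = (N+1)·(wᴺ·σ²/h²)^{1/(N+1)} − N·w − σ²/h² is a monotonically decreasing function of h on the region where h² ≥ σ²/w: for any gains h_a ≥ h_b > 0 with h_b² ≥ σ²/w, one has ΔP(h_a) ≤ ΔP(h_b). Hence among candidate subcarriers satisfying h² > σ²/w, the one with the best channel gain yields the largest power decrease. -/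
/-!
Write `t = σ² / h²`, so that `t ∈ (0, w]` on the region `h² ≥ σ² / w`, and substitute
`s = (t / w) ^ (1 / (N + 1)) ∈ (0, 1]`. Then `ΔP = w * ((N + 1) * s - s ^ (N + 1)) - N * w`, and
`s ↦ (N + 1) * s - s ^ (N + 1)` is increasing on `[0, 1]` because `s ^ (N + 1)` is
`(N + 1)`-Lipschitz there. As `h` grows, `t` and hence `s` decrease.
-/

open Set

lemma monotoneOn_natCast_mul_sub_pow (n : ℕ) :
    MonotoneOn (fun s : ℝ => n * s - s ^ n) (Icc 0 1) := by
  intro u ⟨hu0, hu1⟩ v ⟨hv0, hv1⟩ huv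
  have hmax : max |v| |u| ^ (n - 1) ≤ 1 :=
    pow_le_one₀ (le_max_of_le_left (abs_nonneg v))
      (max_le (by rwa [abs_of_nonneg hv0]) (by rwa [abs_of_nonneg hu0]))
  have hdiff : v ^ n - u ^ n ≤ (v - u) * n := calc
    v ^ n - u ^ n ≤ |v ^ n - u ^ n| := le_abs_self _
    _ ≤ |v - u| * n * max |v| |u| ^ (n - 1) := abs_pow_sub_pow_le v u n
    _ ≤ |v - u| * n := mul_le_of_le_one_right (by positivity) hmax
    _ = (v - u) * n := by rw [abs_of_nonneg (sub_nonneg.mpr huv)]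
  dsimp only
  linarith

lemma powerVariation_eq_of_rpow (N : ℕ) {w t : ℝ} (hw : 0 < w) (ht : 0 ≤ t) :
    ((N : ℝ) + 1) * (w ^ N * t) ^ ((1 : ℝ) / (N + 1)) - N * w - t =
      w * ((N + 1 : ℕ) * (t / w) ^ ((1 : ℝ) / (N + 1)) - ((t / w) ^ ((1 : ℝ) / (N + 1))) ^ (N + 1))
        - N * w := by
  have hsplit : w ^ N * t = w ^ (N + 1) * (t / w) := by field_simp; ring
  have hroot : (w ^ (N + 1)) ^ ((1 : ℝ) / (N + 1)) = w := by
    rw [one_div]; exact_mod_cast Real.pow_rpow_inv_natCast hw.le N.succ_ne_zero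
  have hpow : ((t / w) ^ ((1 : ℝ) / (N + 1))) ^ (N + 1) = t / w := by
    rw [one_div]; exact_mod_cast Real.rpow_inv_natCast_pow (by positivity) N.succ_ne_zero
  rw [hsplit, Real.mul_rpow (by positivity) (by positivity), hroot, hpow]
  field_simp
  push_cast
  ring

lemma monotoneOn_powerVariation (N : ℕ) {w : ℝ} (hw : 0 < w) :
    MonotoneOn (fun t : ℝ => ((N : ℝ) + 1) * (w ^ N * t) ^ ((1 : ℝ) / (N + 1)) - N * w - t)
      (Icc 0 w) := by
  have he : (0 : ℝ) ≤ 1 / (N + 1) := by positivity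
  have hmaps : MapsTo (fun t : ℝ => (t / w) ^ ((1 : ℝ) / (N + 1))) (Icc 0 w) (Icc 0 1) :=
    fun t ⟨ht0, htw⟩ => ⟨by positivity, Real.rpow_le_one (by positivity) ((div_le_one hw).mpr htw) he⟩
  intro ta hta tb htb htab
  have hs := monotoneOn_natCast_mul_sub_pow (N + 1) (hmaps hta) (hmaps htb)
    (Real.rpow_le_rpow (div_nonneg hta.1 hw.le) (div_le_div_of_nonneg_right htab hw.le) he)
  dsimp only at hs ⊢
  rw [powerVariation_eq_of_rpow N hw hta.1, powerVariation_eq_of_rpow N hw htb.1]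
  exact sub_le_sub_right (mul_le_mul_of_nonneg_left hs hw.le) _

theorem power_variation_decreasing_in_gain_general
    (N : ℕ) (w σ2 : ℝ) (hw : 0 < w) (hσ2 : 0 < σ2)
    (ΔP : ℝ → ℝ)
    (hΔP : ∀ h : ℝ, ΔP h =
      ((N : ℝ) + 1) * (w ^ N * σ2 / h ^ 2) ^ ((1 : ℝ) / (N + 1)) - N * w - σ2 / h ^ 2)
    (ha hb : ℝ) (hab : ha ≥ hb) (hbpos : 0 < hb) (hbdom : hb ^ 2 ≥ σ2 / w) :
    ΔP ha ≤ ΔP hb := by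
  have hsq : hb ^ 2 ≤ ha ^ 2 := pow_le_pow_left₀ hbpos.le hab 2
  have hratio : σ2 / ha ^ 2 ≤ σ2 / hb ^ 2 := div_le_div_of_nonneg_left hσ2.le (by positivity) hsq
  have hbw : σ2 / hb ^ 2 ≤ w := by
    rw [ge_iff_le, div_le_iff₀ hw] at hbdom
    rw [div_le_iff₀ (by positivity)]
    linarith
  have hmono := monotoneOn_powerVariation N hw
    ⟨by positivity, hratio.trans hbw⟩ ⟨by positivity, hbw⟩ hratio
  simpa only [hΔP, mul_div_assoc] using hmono

/-- Appendix A: `ΔP(h) = (N+1)·(wᴺ·σ²/h²)^(1/(N+1)) − N·w − σ²/h²` is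
monotonically decreasing in `h` on the region `h² ≥ σ²/w`: for any
`h_a ≥ h_b > 0` with `h_b² ≥ σ²/w`, one has `ΔP(h_a) ≤ ΔP(h_b)`. -/
theorem power_variation_decreasing_in_gain
    (N : ℕ) (hN : 1 ≤ N) (w σ2 : ℝ) (hw : 0 < w) (hσ2 : 0 < σ2)
    (ΔP : ℝ → ℝ)
    (hΔP : ∀ h : ℝ, ΔP h =
      ((N : ℝ) + 1) * (w ^ N * σ2 / h ^ 2) ^ ((1 : ℝ) / (N + 1)) - N * w - σ2 / h ^ 2)
    (ha hb : ℝ) (hab : ha ≥ hb) (hbpos : 0 < hb) (hbdom : hb ^ 2 ≥ σ2 / w) :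
    ΔP ha ≤ ΔP hb :=
  power_variation_decreasing_in_gain_general N w σ2 hw hσ2 ΔP hΔP ha hb hab hbpos hbdom
end

section
/- (LPO optimum, eq. (12)) Define P* = ((w·h²/(Q·h² + σ²))^{N/(N+1)} − 1)·(Q + σ²/h²). If w·h² ≥ Q·h² + σ² (so that P* ≥ 0), then P* is the global minimizer of f over [0, ∞): f(P) ≥ f(P*) for every P ≥ 0, and the derivative of f vanishes at P*. -/
/-!
Put `k = Q + σ²/h²`, `a = w h²/(Q h² + σ²)` and `u = 1 + P/k`. Then `w = k a` and
`f P = k (u + N a u^{-1/N}) - k (1 + N a)`. Weighted AM–GM with weights `1/(N+1)` and `N/(N+1)`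
on `u` and `a u^{-1/N}` gives `u + N a u^{-1/N} ≥ (N+1) a^{N/(N+1)}`, with equality and vanishing
derivative at `u = a^{N/(N+1)}`, which is `P = P*`. The feasibility condition says `a ≥ 1`,
i.e. `P* ≥ 0`.
-/

open Real

section

variable {n a : ℝ}

lemma mul_rpow_rpow_div_add_one_neg_inv (hn : 0 < n) (ha : 0 < a) :
    a * (a ^ (n / (n + 1))) ^ (-(1 / n)) = a ^ (n / (n + 1)) := by
  rw [← rpow_mul ha.le]
  conv_lhs => arg 1; rw [← rpow_one a]
  rw [← rpow_add ha]
  congr 1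
  field_simp
  ring

lemma add_one_mul_rpow_le_add_mul_rpow_neg_inv (hn : 0 < n) (ha : 0 ≤ a) {u : ℝ} (hu : 0 < u) :
    (n + 1) * a ^ (n / (n + 1)) ≤ u + n * a * u ^ (-(1 / n)) := by
  have hweights : 1 / (n + 1) + n / (n + 1) = 1 := by field_simp; ring
  have hamgm := geom_mean_le_arith_mean2_weighted (by positivity) (by positivity) hu.le
    (by positivity : 0 ≤ a * u ^ (-(1 / n))) hweights
  have hgeom :
      u ^ (1 / (n + 1)) * (a * u ^ (-(1 / n))) ^ (n / (n + 1)) = a ^ (n / (n + 1)) := by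
    rw [mul_rpow ha (by positivity), ← rpow_mul hu.le, mul_left_comm, ← rpow_add hu]
    have hexp : 1 / (n + 1) + -(1 / n) * (n / (n + 1)) = 0 := by field_simp; ring
    rw [hexp, rpow_zero, mul_one]
  rw [hgeom] at hamgm
  have hn1 : 0 < n + 1 := by linarith
  calc (n + 1) * a ^ (n / (n + 1))
      ≤ (n + 1) * (1 / (n + 1) * u + n / (n + 1) * (a * u ^ (-(1 / n)))) := by gcongr
    _ = u + n * a * u ^ (-(1 / n)) := by field_simp

lemma add_mul_rpow_neg_inv_rpow_div_add_one (hn : 0 < n) (ha : 0 < a) :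
    a ^ (n / (n + 1)) + n * a * (a ^ (n / (n + 1))) ^ (-(1 / n)) =
      (n + 1) * a ^ (n / (n + 1)) := by
  rw [mul_assoc, mul_rpow_rpow_div_add_one_neg_inv hn ha]
  ring

lemma hasDerivAt_add_mul_rpow_neg_inv_rpow_div_add_one (hn : 0 < n) (ha : 0 < a) :
    HasDerivAt (fun u => u + n * a * u ^ (-(1 / n))) 0 (a ^ (n / (n + 1))) := by
  have hu : 0 < a ^ (n / (n + 1)) := rpow_pos_of_pos ha _
  refine ((hasDerivAt_id _).add
    ((hasDerivAt_rpow_const (p := -(1 / n)) (Or.inl hu.ne')).const_mul (n * a))).congr_deriv ?_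
  have key := mul_rpow_rpow_div_add_one_neg_inv hn ha
  rw [rpow_sub_one hu.ne']
  field_simp
  linear_combination -key

end

theorem LPO_optimum_general
    (N : ℕ) (hN : 1 ≤ N) (w Q h σ2 : ℝ) (hQ : 0 ≤ Q)
    (hh : 0 < h) (hσ2 : 0 < σ2)
    (f : ℝ → ℝ)
    (hf : ∀ P : ℝ, f P =
      P + N * w * ((1 + P * h ^ 2 / (Q * h ^ 2 + σ2)) ^ (-(1 / (N : ℝ))) - 1))
    (Pstar : ℝ)
    (hPstar : Pstar =
      ((w * h ^ 2 / (Q * h ^ 2 + σ2)) ^ ((N : ℝ) / (N + 1)) - 1) * (Q + σ2 / h ^ 2))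
    (hfeas : w * h ^ 2 ≥ Q * h ^ 2 + σ2) :
    0 ≤ Pstar ∧ (∀ P : ℝ, 0 ≤ P → f Pstar ≤ f P) ∧ HasDerivAt f 0 Pstar := by
  set n : ℝ := (N : ℝ)
  have hn : 0 < n := by positivity
  have hc : 0 < Q * h ^ 2 + σ2 := by positivity
  set k := Q + σ2 / h ^ 2 with hk_def
  have hk : 0 < k := by positivity
  set a := w * h ^ 2 / (Q * h ^ 2 + σ2) with ha_def
  have ha : 1 ≤ a := (one_le_div hc).mpr hfeas
  have ha₀ : 0 < a := one_pos.trans_le ha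
  set φ : ℝ → ℝ := fun u => u + n * a * u ^ (-(1 / n))
  have hf_eq : f = fun P => k * φ (1 + P / k) - k * (1 + n * a) := by
    have hkc : Q * h ^ 2 + σ2 = k * h ^ 2 := by rw [hk_def]; field_simp
    have hscale : h ^ 2 / (Q * h ^ 2 + σ2) = 1 / k := by rw [hkc]; field_simp
    have hw : w = k * a := by rw [ha_def, hkc]; field_simp
    funext P
    rw [hf P, mul_div_assoc, hscale, hw]
    simp only [φ]
    field_simp
    ring
  have hu : 1 + Pstar / k = a ^ (n / (n + 1)) := by rw [hPstar]; field_simp; ring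
  refine ⟨?_, fun P hP => ?_, ?_⟩
  · rw [hPstar]
    exact mul_nonneg (sub_nonneg.mpr (one_le_rpow ha (by positivity))) hk.le
  · have hφ_opt : φ (a ^ (n / (n + 1))) = (n + 1) * a ^ (n / (n + 1)) :=
      add_mul_rpow_neg_inv_rpow_div_add_one hn ha₀
    rw [hf_eq]
    dsimp only
    rw [hu, hφ_opt]
    gcongr
    exact add_one_mul_rpow_le_add_mul_rpow_neg_inv hn ha₀.le (by positivity)
  · have hφ : HasDerivAt φ 0 (1 + Pstar / k) :=
      hu ▸ hasDerivAt_add_mul_rpow_neg_inv_rpow_div_add_one hn ha₀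
    have hinner : HasDerivAt (fun P => 1 + P / k) (1 / k) Pstar :=
      ((hasDerivAt_id Pstar).div_const k).const_add 1
    have hd := ((hφ.comp Pstar hinner).const_mul k).sub_const (k * (1 + n * a))
    rw [zero_mul, mul_zero] at hd
    rw [hf_eq]
    exact hd

/-- LPO optimum (eq. (12)): with
`P* = ((w·h²/(Q·h² + σ²))^{N/(N+1)} − 1)·(Q + σ²/h²)`, if
`w·h² ≥ Q·h² + σ²` then `P* ≥ 0`, `P*` is the global minimizer of `f` over
`[0, ∞)`, and the derivative of `f` vanishes at `P*`. -/
theorem LPO_optimum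
    (N : ℕ) (hN : 1 ≤ N) (w Q h σ2 : ℝ) (hw : 0 < w) (hQ : 0 ≤ Q)
    (hh : 0 < h) (hσ2 : 0 < σ2)
    (f : ℝ → ℝ)
    (hf : ∀ P : ℝ, f P =
      P + N * w * ((1 + P * h ^ 2 / (Q * h ^ 2 + σ2)) ^ (-(1 / (N : ℝ))) - 1))
    (Pstar : ℝ)
    (hPstar : Pstar =
      ((w * h ^ 2 / (Q * h ^ 2 + σ2)) ^ ((N : ℝ) / (N + 1)) - 1) * (Q + σ2 / h ^ 2))
    (hfeas : w * h ^ 2 ≥ Q * h ^ 2 + σ2) :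
    0 ≤ Pstar ∧ (∀ P : ℝ, 0 ≤ P → f Pstar ≤ f P) ∧ HasDerivAt f 0 Pstar :=
  LPO_optimum_general N hN w Q h σ2 hQ hh hσ2 f hf Pstar hPstar hfeas
end

section
/- (LPO constrained case) Define P* = ((w·h²/(Q·h² + σ²))^{N/(N+1)} − 1)·(Q + σ²/h²). If P* ≤ Q (so that the unconstrained optimum violates the power multiplexing constraint P ≥ Q), then the minimum of f over [Q, ∞) is attained at the boundary: f(P) ≥ f(Q) for every P ≥ Q. -/
/-! With `A = h²/(Qh² + σ²)`, `f` is `P ↦ P + N w (1 + P A)^(-1/N)` up to a constant, and its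
derivative `1 - w A (1 + P A)^(-(N+1)/N)` increases with `P`. The hypothesis `P* ≤ Q` says
exactly that `(w A)^(N/(N+1)) ≤ 1 + Q A`, i.e. that this derivative is already nonnegative at
`P = Q`; hence `f` is monotone on `[Q, ∞)`. -/

open Real Set

section

variable {a b A : ℝ}

theorem hasDerivAt_add_mul_one_add_mul_rpow_neg {x : ℝ} (hx : 0 < 1 + x * A) :
    HasDerivAt (fun x => x + b * (1 + x * A) ^ (-a))
      (1 - b * a * A / (1 + x * A) ^ (a + 1)) x := by
  have hinner : HasDerivAt (fun x => 1 + x * A) A x := by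
    simpa using ((hasDerivAt_id x).mul_const A).const_add 1
  refine ((hasDerivAt_id' x).add
    ((hinner.rpow_const (p := -a) (Or.inl hx.ne')).const_mul b)).congr_deriv ?_
  rw [show -a - 1 = -(a + 1) by ring, rpow_neg hx.le]
  ring

theorem monotoneOn_add_mul_one_add_mul_rpow_neg {x₀ : ℝ} (ha : 0 ≤ a) (hA : 0 ≤ A)
    (hx₀ : 0 < 1 + x₀ * A) (hslope : b * a * A ≤ (1 + x₀ * A) ^ (a + 1)) :
    MonotoneOn (fun x => x + b * (1 + x * A) ^ (-a)) (Ici x₀) := by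
  have hpos : ∀ x, x₀ ≤ x → 0 < 1 + x * A := fun x hx => by nlinarith
  have hderiv x (hx : x ∈ Ici x₀) :=
    hasDerivAt_add_mul_one_add_mul_rpow_neg (a := a) (b := b) (hpos x hx)
  refine monotoneOn_of_hasDerivWithinAt_nonneg (convex_Ici x₀)
    (fun x hx => (hderiv x hx).continuousAt.continuousWithinAt)
    (fun x hx => (hderiv x (interior_subset hx)).hasDerivWithinAt) fun x hx => ?_
  have hx : x₀ ≤ x := interior_subset (s := Ici x₀) hx
  have hgrow : (1 + x₀ * A) ^ (a + 1) ≤ (1 + x * A) ^ (a + 1) :=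
    rpow_le_rpow hx₀.le (by nlinarith) (by linarith)
  have : b * a * A / (1 + x * A) ^ (a + 1) ≤ 1 :=
    div_le_one_of_le₀ (hslope.trans hgrow) (rpow_nonneg (hpos x hx).le _)
  linarith

end

/-- LPO constrained case: with
`P* = ((w·h²/(Q·h² + σ²))^{N/(N+1)} − 1)·(Q + σ²/h²)`, if `P* ≤ Q` then the
minimum of `f` over `[Q, ∞)` is attained at the boundary: `f(Q) ≤ f(P)` for
every `P ≥ Q`. -/
theorem LPO_constrained_boundary
    (N : ℕ) (hN : 1 ≤ N) (w Q h σ2 : ℝ) (hw : 0 < w) (hQ : 0 < Q)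
    (hh : 0 < h) (hσ2 : 0 < σ2)
    (f : ℝ → ℝ)
    (hf : ∀ P : ℝ, f P =
      P + N * w * ((1 + P * h ^ 2 / (Q * h ^ 2 + σ2)) ^ (-(1 / (N : ℝ))) - 1))
    (Pstar : ℝ)
    (hPstar : Pstar =
      ((w * h ^ 2 / (Q * h ^ 2 + σ2)) ^ ((N : ℝ) / (N + 1)) - 1) * (Q + σ2 / h ^ 2))
    (hviol : Pstar ≤ Q) :
    ∀ P : ℝ, Q ≤ P → f Q ≤ f P := by
  intro P hP
  have hN0 : (0 : ℝ) < N := by exact_mod_cast hN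
  set A := h ^ 2 / (Q * h ^ 2 + σ2) with hA_def
  have hA : 0 < A := by positivity
  have hfA : ∀ P, f P = P + N * w * (1 + P * A) ^ (-(1 / (N : ℝ))) - N * w := fun P => by
    rw [hf, hA_def, mul_div_assoc]; ring
  have hroot : (w * A) ^ ((N : ℝ) / (N + 1)) ≤ 1 + Q * A := by
    have : Pstar = ((w * A) ^ ((N : ℝ) / (N + 1)) - 1) / A := by
      rw [hPstar, hA_def, mul_div_assoc]; field_simp
    rw [this, div_le_iff₀ hA] at hviol
    linarith
  have hslope : N * w * (1 / N) * A ≤ (1 + Q * A) ^ (1 / (N : ℝ) + 1) := by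
    rw [← rpow_inv_le_iff_of_pos (by positivity) (by positivity) (by positivity)]
    convert hroot using 2
    · field_simp
    · field_simp
      ring
  have hmono := monotoneOn_add_mul_one_add_mul_rpow_neg (by positivity) hA.le (by positivity)
    hslope
  rw [hfA, hfA]
  linarith [hmono self_mem_Ici hP hP]
end
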